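/- For every prime p and all positive integers n and r, one has the identity in ℚ: C(n·r·p, r·p) = C(n·r, r) · Σ_{j=0}^{r·p} ((n−1)·r·p)^j · H^{(p)}_{r·p}(1^j). -/

import Mathlib

/-!
Since `C(a + N, N) = ∏_{m=1}^N (1 + a/m)`, take `a = (n-1)rp`, `N = rp` and split the product
according to whether `p ∣ m`. The factors with `m = pk` give
`∏_{k=1}^r (1 + (n-1)r/k) = C(nr, r)`, and the remaining ones give `∏_{p ∤ m ≤ rp} (1 + a/m)`,
whose expansion in powers of `a` has the restricted harmonic sums `H^{(p)}_{rp}(1^j)` as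
coefficients.
-/

/-- `p`-restricted multiple harmonic sum `H^{(p)}_N(s₁,…,s_k)`. -/
def mhsP (p : ℕ) : ℕ → List ℕ → ℚ
  | _, [] => 1
  | N, s :: t =>
    ∑ n ∈ (Finset.Icc 1 N).filter (fun m => ¬ p ∣ m), (1 / (n : ℚ) ^ s) * mhsP p (n - 1) t

open Finset

lemma mhsP_nil (p N : ℕ) : mhsP p N [] = 1 := by rw [mhsP]

lemma mhsP_eq_zero_of_length_gt (p : ℕ) (l : List ℕ) {N : ℕ} (h : N < l.length) :
    mhsP p N l = 0 := by
  induction l generalizing N with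
  | nil => simp at h
  | cons s t ih =>
    rw [mhsP]
    refine sum_eq_zero fun n hn => ?_
    have hn' := mem_Icc.1 (mem_filter.1 hn).1
    rw [List.length_cons] at h
    rw [ih (by omega), mul_zero]

lemma mhsP_succ_cons (p N s : ℕ) (t : List ℕ) :
    mhsP p (N + 1) (s :: t) =
      mhsP p N (s :: t) + if p ∣ N + 1 then 0 else mhsP p N t / ((N + 1 : ℕ) : ℚ) ^ s := by
  rw [mhsP, mhsP, ← insert_Icc_right_eq_Icc_add_one (by omega), filter_insert]
  split_ifs
  · simp
  · rw [sum_insert (by simp), add_comm, Nat.add_sub_cancel, one_div, inv_mul_eq_div]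

lemma sum_pow_mul_mhsP_replicate_succ (p N : ℕ) (x : ℚ) :
    ∑ j ∈ range (N + 2), x ^ j * mhsP p (N + 1) (List.replicate j 1) =
      (1 + if p ∣ N + 1 then 0 else x / ((N + 1 : ℕ) : ℚ)) *
        ∑ j ∈ range (N + 1), x ^ j * mhsP p N (List.replicate j 1) := by
  set G := ∑ j ∈ range (N + 1), x ^ j * mhsP p N (List.replicate j 1)
  have shift :
      ∑ j ∈ range (N + 1), x ^ (j + 1) * mhsP p N (List.replicate (j + 1) 1) + 1 = G := by
    have := sum_range_succ' (fun j => x ^ j * mhsP p N (List.replicate j 1)) (N + 1)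
    rw [sum_range_succ, mhsP_eq_zero_of_length_gt _ _ (by simp), mul_zero, add_zero] at this
    simpa [mhsP_nil] using this.symm
  have step (j : ℕ) : mhsP p (N + 1) (List.replicate (j + 1) 1) =
      mhsP p N (List.replicate (j + 1) 1) +
        if p ∣ N + 1 then 0 else mhsP p N (List.replicate j 1) / ((N + 1 : ℕ) : ℚ) := by
    rw [List.replicate_succ, mhsP_succ_cons, pow_one]
  rw [sum_range_succ']
  simp only [step, List.replicate_zero, mhsP_nil, mul_add, sum_add_distrib, pow_zero, mul_one]
  rw [add_right_comm, shift]
  split_ifs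
  · simp
  · rw [add_mul, one_mul, mul_sum]
    congr 1
    refine sum_congr rfl fun j _ => ?_
    ring

theorem sum_pow_mul_mhsP_replicate_one_eq_prod (p N : ℕ) (x : ℚ) :
    ∑ j ∈ range (N + 1), x ^ j * mhsP p N (List.replicate j 1) =
      ∏ m ∈ Icc 1 N with ¬ p ∣ m, (1 + x / m) := by
  induction N with
  | zero => simp [mhsP_nil]
  | succ N ih =>
    rw [sum_pow_mul_mhsP_replicate_succ, ih, ← insert_Icc_right_eq_Icc_add_one (by omega),
      filter_insert]
    split_ifs
    · simp
    · rw [prod_insert (by simp)]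

theorem Nat.cast_add_choose_eq_prod {K : Type*} [Field K] [CharZero K] (a b : ℕ) :
    ((a + b).choose b : K) = ∏ m ∈ Icc 1 b, ((a + m : K) / m) := by
  induction b with
  | zero => simp
  | succ b ih =>
    rw [prod_Icc_succ_top (by omega), ← ih, ← add_assoc]
    have key : ((a + b + 1 : ℕ) : K) * (a + b).choose b =
        (a + b + 1).choose (b + 1) * (b + 1 : ℕ) := by
      exact_mod_cast Nat.add_one_mul_choose_eq (a + b) b
    push_cast at key ⊢
    field_simp
    linear_combination -key

theorem prod_Icc_filter_dvd_eq_prod_mul {M : Type*} [CommMonoid M] {p : ℕ} (hp : p ≠ 0)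
    (r : ℕ) (f : ℕ → M) :
    ∏ m ∈ Icc 1 (r * p) with p ∣ m, f m = ∏ k ∈ Icc 1 r, f (p * k) := by
  have hp' := Nat.pos_of_ne_zero hp
  have cancel (k : ℕ) : p * k / p = k := Nat.mul_div_cancel_left k hp'
  refine prod_bij' (fun m _ => m / p) (fun k _ => p * k) ?_ ?_ ?_ ?_ ?_
  · intro m hm
    obtain ⟨hm, k, rfl⟩ := mem_filter.1 hm
    rw [mem_Icc] at hm ⊢
    rw [cancel]
    constructor <;> nlinarith
  · intro k hk
    rw [mem_Icc] at hk
    rw [mem_filter, mem_Icc]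
    exact ⟨⟨by nlinarith, by nlinarith⟩, dvd_mul_right p k⟩
  · intro m hm
    exact Nat.mul_div_cancel' (mem_filter.1 hm).2
  · exact fun k _ => cancel k
  · intro m hm
    rw [Nat.mul_div_cancel' (mem_filter.1 hm).2]

theorem choose_nrp_rp_eq_restricted_mhs_series_general (p n r : ℕ) (hp : p.Prime)
    (hn : 1 ≤ n) :
    (Nat.choose (n * r * p) (r * p) : ℚ) =
      (Nat.choose (n * r) r : ℚ) *
        ∑ j ∈ Finset.range (r * p + 1),
          (((n : ℚ) - 1) * (r : ℚ) * (p : ℚ)) ^ j * mhsP p (r * p) (List.replicate j 1) := by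
  have hnr : n * r = (n - 1) * r + r := by rw [← add_one_mul, Nat.sub_add_cancel hn]
  have hx : ((n : ℚ) - 1) * r * p = (((n - 1) * r * p : ℕ) : ℚ) := by
    push_cast [Nat.cast_sub hn]
    ring
  rw [hx, hnr, add_mul, sum_pow_mul_mhsP_replicate_one_eq_prod, Nat.cast_add_choose_eq_prod,
    Nat.cast_add_choose_eq_prod, ← prod_filter_mul_prod_filter_not _ (p ∣ ·),
    prod_Icc_filter_dvd_eq_prod_mul hp.ne_zero]
  congr 1
  · refine prod_congr rfl fun k hk => ?_
    have : (k : ℚ) ≠ 0 := Nat.cast_ne_zero.mpr (Nat.one_le_iff_ne_zero.1 (mem_Icc.1 hk).1)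
    have : (p : ℚ) ≠ 0 := by exact_mod_cast hp.ne_zero
    push_cast
    field_simp
  · refine prod_congr rfl fun m hm => ?_
    have : (m : ℚ) ≠ 0 :=
      Nat.cast_ne_zero.mpr (Nat.one_le_iff_ne_zero.1 (mem_Icc.1 (mem_filter.1 hm).1).1)
    field_simp
    ring

/-- For a prime `p` and positive integers `n`, `r`,
`C(nrp, rp) = C(nr, r) · ∑_{j=0}^{rp} ((n−1)rp)^j · H^{(p)}_{rp}(1^j)` in `ℚ`. -/
theorem choose_nrp_rp_eq_restricted_mhs_series (p n r : ℕ) (hp : p.Prime)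
    (hn : 1 ≤ n) (hr : 1 ≤ r) :
    (Nat.choose (n * r * p) (r * p) : ℚ) =
      (Nat.choose (n * r) r : ℚ) *
        ∑ j ∈ Finset.range (r * p + 1),
          (((n : ℚ) - 1) * (r : ℚ) * (p : ℚ)) ^ j * mhsP p (r * p) (List.replicate j 1) :=
  choose_nrp_rp_eq_restricted_mhs_series_general p n r hp hn
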